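/- arXiv:0810.4054 — 3 statements merged into one kernel-verified Lean document; each statement's English description precedes it below -/
import Mathlib

section
/- A 2-plane P in R^{2,2} is an α-plane (all self-dual 2-forms vanish on P) if and only if P is both J-invariant (holomorphic) and Lagrangian with respect to Ω, where J(X) = (-X^2,X^1,-X^4,X^3) and Ω(V,W) = G(V,JW). -/
/- STATEMENT 8: a 2-plane P in ℝ^{2,2} is an α-plane (all self-dual 2-forms
vanish on P) iff P is J-invariant and Lagrangian for Ω(V,W) = G(V,JW),
where J(X) = (-X²,X¹,-X⁴,X³). -/

open Matrix
noncomputable section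

def G (v w : Fin 4 → ℝ) : ℝ := v 0 * w 0 + v 1 * w 1 - v 2 * w 2 - v 3 * w 3

def gInv : Fin 4 → ℝ := ![1, 1, -1, -1]

def eps (i j k l : Fin 4) : ℝ :=
  (((j:ℕ):ℝ) - ((i:ℕ):ℝ)) * ((((k:ℕ):ℝ) - ((i:ℕ):ℝ)) * ((((l:ℕ):ℝ) - ((i:ℕ):ℝ)) *
    ((((k:ℕ):ℝ) - ((j:ℕ):ℝ)) * ((((l:ℕ):ℝ) - ((j:ℕ):ℝ)) * (((l:ℕ):ℝ) - ((k:ℕ):ℝ)))))) / 12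

/-- Hodge star on 2-forms (antisymmetric component matrices) of the neutral
metric, for the orientation used in the paper. -/
def hodgeStar (M : Matrix (Fin 4) (Fin 4) ℝ) : Matrix (Fin 4) (Fin 4) ℝ :=
  fun i j => -(1/2) * ∑ k : Fin 4, ∑ l : Fin 4, eps i j k l * gInv k * gInv l * M k l

def ωval (M : Matrix (Fin 4) (Fin 4) ℝ) (v w : Fin 4 → ℝ) : ℝ :=
  ∑ i : Fin 4, ∑ j : Fin 4, M i j * v i * w j

def Jmap (v : Fin 4 → ℝ) : Fin 4 → ℝ := ![-v 1, v 0, -v 3, v 2]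

/-
The self-dual 2-forms of `ℝ^{2,2}` are spanned by the Kähler form `Ω(V, W) = G(V, JW)` and
the real and imaginary parts of the holomorphic volume form `dz¹ ∧ dz²`. A 2-plane on which
`dz¹ ∧ dz²` vanishes is a complex line `span {u, Ju}` (its `ℂ`-determinant is zero), and
every complex line is killed by `dz¹ ∧ dz²`. So `P` is an α-plane iff it is a complex line
on which `Ω` vanishes, i.e. iff it is `J`-invariant and Lagrangian.
-/

def selfDualForm (a b c : ℝ) : Matrix (Fin 4) (Fin 4) ℝ :=
  !![0, a, b, c; -a, 0, c, -b; -b, -c, 0, -a; -c, b, a, 0]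

lemma selfDualForm_transpose (a b c : ℝ) : (selfDualForm a b c)ᵀ = -selfDualForm a b c := by
  ext i j; fin_cases i <;> fin_cases j <;> simp [selfDualForm]

lemma hodgeStar_selfDualForm (a b c : ℝ) :
    hodgeStar (selfDualForm a b c) = selfDualForm a b c := by
  ext i j
  fin_cases i <;> fin_cases j <;>
    simp [hodgeStar, eps, gInv, selfDualForm, Fin.sum_univ_four] <;> norm_num <;> ring

lemma hodgeStar_apply_zero_one (M : Matrix (Fin 4) (Fin 4) ℝ) :
    hodgeStar M 0 1 = -(M 2 3 - M 3 2) / 2 := by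
  simp [hodgeStar, eps, gInv, Fin.sum_univ_four]; norm_num; ring

lemma hodgeStar_apply_zero_two (M : Matrix (Fin 4) (Fin 4) ℝ) :
    hodgeStar M 0 2 = -(M 1 3 - M 3 1) / 2 := by
  simp [hodgeStar, eps, gInv, Fin.sum_univ_four]; norm_num; ring

lemma hodgeStar_apply_zero_three (M : Matrix (Fin 4) (Fin 4) ℝ) :
    hodgeStar M 0 3 = (M 1 2 - M 2 1) / 2 := by
  simp [hodgeStar, eps, gInv, Fin.sum_univ_four]; norm_num; ring

lemma eq_selfDualForm {M : Matrix (Fin 4) (Fin 4) ℝ} (hT : Mᵀ = -M) (hS : hodgeStar M = M) :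
    M = selfDualForm (M 0 1) (M 0 2) (M 0 3) := by
  have skew (i j : Fin 4) : M j i = -M i j := by simpa using congrFun (congrFun hT i) j
  have h01 := hodgeStar_apply_zero_one M
  have h02 := hodgeStar_apply_zero_two M
  have h03 := hodgeStar_apply_zero_three M
  rw [hS] at h01 h02 h03
  ext i j
  fin_cases i <;> fin_cases j <;>
    simp only [Fin.zero_eta, Fin.mk_one, Fin.reduceFinMk, Fin.isValue, selfDualForm, of_apply,
      cons_val', cons_val, cons_val_fin_one, cons_val_one, cons_val_zero] <;>
    linarith [skew 0 0, skew 1 1, skew 2 2, skew 3 3, skew 0 1, skew 0 2, skew 0 3,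
      skew 1 2, skew 1 3, skew 2 3]

/- Real and imaginary parts of `dz¹ ∧ dz²` in the complex coordinates `z¹ = x⁰ + i x¹`,
`z² = x² + i x³` for which `Jmap` is multiplication by `i`. -/
def reHolVol (v w : Fin 4 → ℝ) : ℝ := v 0 * w 2 - v 1 * w 3 - v 2 * w 0 + v 3 * w 1

def imHolVol (v w : Fin 4 → ℝ) : ℝ := v 0 * w 3 + v 1 * w 2 - v 2 * w 1 - v 3 * w 0

lemma ωval_selfDualForm (a b c : ℝ) (v w : Fin 4 → ℝ) :
    ωval (selfDualForm a b c) v w = -a * G v (Jmap w) + b * reHolVol v w + c * imHolVol v w := by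
  simp only [ωval, selfDualForm, of_apply, cons_val', cons_val_fin_one, Fin.sum_univ_four,
    Fin.isValue, cons_val_zero, cons_val_one, cons_val, zero_mul, zero_add, neg_mul, add_zero, G,
    Jmap, mul_neg, sub_neg_eq_add, reHolVol, imHolVol]
  ring

def complexLine (u : Fin 4 → ℝ) : Submodule ℝ (Fin 4 → ℝ) :=
  Submodule.span ℝ {u, Jmap u}

lemma Jmap_smul_add_smul (a b : ℝ) (u w : Fin 4 → ℝ) :
    Jmap (a • u + b • w) = a • Jmap u + b • Jmap w := by
  ext k
  fin_cases k <;>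
    simp only [Jmap, Fin.isValue, Fin.zero_eta, Fin.mk_one, Fin.reduceFinMk, Pi.add_apply,
      Pi.smul_apply, smul_eq_mul, cons_val_zero, cons_val_one, cons_val, smul_cons, mul_neg,
      smul_empty] <;>
    ring

lemma Jmap_Jmap (u : Fin 4 → ℝ) : Jmap (Jmap u) = -u := by
  ext k; fin_cases k <;> simp [Jmap]

lemma Jmap_mem_complexLine {u v : Fin 4 → ℝ} (hv : v ∈ complexLine u) :
    Jmap v ∈ complexLine u := by
  obtain ⟨a, b, rfl⟩ := Submodule.mem_span_pair.mp hv
  rw [Jmap_smul_add_smul, Jmap_Jmap]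
  exact Submodule.mem_span_pair.mpr ⟨-b, a, by module⟩

lemma finrank_complexLine {u : Fin 4 → ℝ} (hu : u ≠ 0) :
    Module.finrank ℝ (complexLine u) = 2 := by
  have hli : LinearIndependent ℝ ![u, Jmap u] := by
    refine LinearIndependent.pair_iff.mpr fun s t hst => ?_
    have h0 := congrFun hst 0
    have h1 := congrFun hst 1
    have h2 := congrFun hst 2
    have h3 := congrFun hst 3
    simp only [Jmap, Fin.isValue, smul_cons, smul_eq_mul, mul_neg, smul_empty, Pi.add_apply,
      Pi.smul_apply, cons_val_zero, Pi.zero_apply, cons_val_one, cons_val] at h0 h1 h2 h3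
    have hsum : (s ^ 2 + t ^ 2) • u = 0 := by
      ext k
      fin_cases k <;> simp only [Fin.reduceFinMk, Pi.smul_apply, smul_eq_mul, Pi.zero_apply]
      · linear_combination s * h0 + t * h1
      · linear_combination s * h1 - t * h0
      · linear_combination s * h2 + t * h3
      · linear_combination s * h3 - t * h2
    have := (smul_eq_zero.mp hsum).resolve_right hu
    constructor <;> nlinarith [sq_nonneg s, sq_nonneg t]
  rw [complexLine, ← Matrix.range_cons_cons_empty u (Jmap u) ![], finrank_span_eq_card hli,
    Fintype.card_fin]

lemma mem_complexLine_of_holVol_eq_zero {u v : Fin 4 → ℝ} (hu : u ≠ 0)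
    (hre : reHolVol u v = 0) (him : imHolVol u v = 0) : v ∈ complexLine u := by
  have hN : u ⬝ᵥ u ≠ 0 := fun h => hu (dotProduct_self_eq_zero.mp h)
  have key : (u ⬝ᵥ u) • v = (u ⬝ᵥ v) • u + (Jmap u ⬝ᵥ v) • Jmap u := by
    simp only [reHolVol, imHolVol] at hre him
    -- in `ℂ²`: `‖u‖² v - (ū₁ v₁ + ū₂ v₂) u = (-ū₂, ū₁) · (dz¹ ∧ dz²)(u, v)`
    ext k
    fin_cases k <;>
      simp only [dotProduct, Fin.sum_univ_four, Fin.isValue, Fin.zero_eta, Fin.mk_one,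
        Fin.reduceFinMk, Pi.smul_apply, smul_eq_mul, Jmap, cons_val_zero, neg_mul, cons_val_one,
        cons_val, smul_cons, mul_neg, smul_empty, Pi.add_apply]
    · linear_combination -(u 2 * hre + u 3 * him)
    · linear_combination u 3 * hre - u 2 * him
    · linear_combination u 0 * hre + u 1 * him
    · linear_combination u 0 * him - u 1 * hre
  refine Submodule.mem_span_pair.mpr
    ⟨(u ⬝ᵥ u)⁻¹ * (u ⬝ᵥ v), (u ⬝ᵥ u)⁻¹ * (Jmap u ⬝ᵥ v), ?_⟩
  rw [mul_smul, mul_smul, ← smul_add, ← key, inv_smul_smul₀ hN]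

lemma reHolVol_eq_zero_of_mem_complexLine {u v w : Fin 4 → ℝ} (hv : v ∈ complexLine u)
    (hw : w ∈ complexLine u) : reHolVol v w = 0 := by
  obtain ⟨a, b, rfl⟩ := Submodule.mem_span_pair.mp hv
  obtain ⟨c, d, rfl⟩ := Submodule.mem_span_pair.mp hw
  simp only [reHolVol, Jmap, Fin.isValue, smul_cons, smul_eq_mul, mul_neg, smul_empty, Pi.add_apply,
    Pi.smul_apply, cons_val_zero, cons_val, cons_val_one]
  ring

lemma imHolVol_eq_zero_of_mem_complexLine {u v w : Fin 4 → ℝ} (hv : v ∈ complexLine u)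
    (hw : w ∈ complexLine u) : imHolVol v w = 0 := by
  obtain ⟨a, b, rfl⟩ := Submodule.mem_span_pair.mp hv
  obtain ⟨c, d, rfl⟩ := Submodule.mem_span_pair.mp hw
  simp only [imHolVol, Jmap, Fin.isValue, smul_cons, smul_eq_mul, mul_neg, smul_empty, Pi.add_apply,
    Pi.smul_apply, cons_val_zero, cons_val, cons_val_one]
  ring

lemma forall_selfDual_ωval_eq_zero_iff (P : Submodule ℝ (Fin 4 → ℝ)) :
    (∀ M : Matrix (Fin 4) (Fin 4) ℝ, Mᵀ = -M → hodgeStar M = M →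
        ∀ v ∈ P, ∀ w ∈ P, ωval M v w = 0) ↔
      ∀ v ∈ P, ∀ w ∈ P, G v (Jmap w) = 0 ∧ reHolVol v w = 0 ∧ imHolVol v w = 0 := by
  constructor
  · intro H v hv w hw
    have vanish (a b c : ℝ) := H (selfDualForm a b c) (selfDualForm_transpose a b c)
      (hodgeStar_selfDualForm a b c) v hv w hw
    simp only [ωval_selfDualForm] at vanish
    exact ⟨by simpa using vanish (-1) 0 0, by simpa using vanish 0 1 0,
      by simpa using vanish 0 0 1⟩
  · rintro H M hT hS v hv w hw
    obtain ⟨hG, hre, him⟩ := H v hv w hw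
    rw [eq_selfDualForm hT hS, ωval_selfDualForm, hG, hre, him]
    ring

theorem stmt8 (P : Submodule ℝ (Fin 4 → ℝ)) (hP : Module.finrank ℝ P = 2) :
    (∀ M : Matrix (Fin 4) (Fin 4) ℝ, Mᵀ = -M → hodgeStar M = M →
        ∀ v ∈ P, ∀ w ∈ P, ωval M v w = 0) ↔
      ((∀ v ∈ P, Jmap v ∈ P) ∧ (∀ v ∈ P, ∀ w ∈ P, G v (Jmap w) = 0)) := by
  rw [forall_selfDual_ωval_eq_zero_iff]
  obtain ⟨u, huP, hu⟩ :=
    Submodule.exists_mem_ne_zero_of_ne_bot (p := P) (by rintro rfl; simp at hP)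
  have hrank : Module.finrank ℝ P = Module.finrank ℝ (complexLine u) := by
    rw [hP, finrank_complexLine hu]
  constructor
  · intro H
    have hPu : P = complexLine u := Submodule.eq_of_le_of_finrank_eq
      (fun v hv => mem_complexLine_of_holVol_eq_zero hu (H u huP v hv).2.1 (H u huP v hv).2.2)
      hrank
    subst hPu
    exact ⟨fun v hv => Jmap_mem_complexLine hv, fun v hv w hw => (H v hv w hw).1⟩
  · rintro ⟨hJ, hL⟩
    have hPu : complexLine u = P := Submodule.eq_of_le_of_finrank_eq
      (Submodule.span_le.mpr (Set.insert_subset huP (Set.singleton_subset_iff.mpr (hJ u huP))))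
      hrank.symm
    subst hPu
    exact fun v hv w hw => ⟨hL v hv w hw, reHolVol_eq_zero_of_mem_complexLine hv hw,
      imHolVol_eq_zero_of_mem_complexLine hv hw⟩
end
end

section
/- A 2-plane P in R^{2,2} is a β-plane (all anti-self-dual 2-forms vanish on P) if and only if P is both J'-invariant and Lagrangian with respect to Ω', where J'(X) = (-X^2,X^1,X^4,-X^3) and Ω'(V,W) = G(V,J'W). -/
open Matrix
noncomputable section

def J'map (v : Fin 4 → ℝ) : Fin 4 → ℝ := ![-v 1, v 0, v 3, -v 2]

/-! The anti-self-dual 2-forms are exactly the matrices `asdForm a b c`, and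
`ωval (asdForm a b c) v w = a G(J'v, w) + b G(K'v, w) + c G(L'v, w)` for the para-quaternionic
triple with `K'² = L'² = 1`, `J' = K'L'`. So `P` is a β-plane iff `J'P`, `K'P`, `L'P ⊆ P^⊥`.
In that case `K'P = P^⊥` by dimension, so `L'P ⊆ K'P` and `J'P = K'L'P ⊆ K'K'P = P`, while the
`J'` condition is the Lagrangian one. Conversely a `J'`-invariant plane is `span {v, J'v}` for
any `v ≠ 0` in it, and `G(K'v, ·)`, `G(L'v, ·)` vanish identically on `v` and `J'v`. -/

open Module

theorem linearIndependent_pair_apply_of_apply_apply_eq_neg {V : Type*} [AddCommGroup V]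
    [Module ℝ V] (J : V →ₗ[ℝ] V) (hJ : ∀ v, J (J v) = -v) {v : V} (hv : v ≠ 0) :
    LinearIndependent ℝ ![v, J v] := by
  refine LinearIndependent.pair_iff.2 fun s t hst => ?_
  have hJst : s • J v - t • v = 0 := by
    simpa [hJ, sub_eq_add_neg] using congrArg J hst
  have hsum : (s ^ 2 + t ^ 2) • v = 0 := by
    rw [show (s ^ 2 + t ^ 2) • v = s • (s • v + t • J v) - t • (s • J v - t • v) by module,
      hst, hJst, smul_zero, smul_zero, sub_zero]
  have hst0 : s ^ 2 + t ^ 2 = 0 := (smul_eq_zero.1 hsum).resolve_right hv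
  constructor <;> nlinarith [sq_nonneg s, sq_nonneg t]

theorem Submodule.span_pair_apply_eq_of_finrank_eq_two {V : Type*} [AddCommGroup V]
    [Module ℝ V] (J : V →ₗ[ℝ] V) (hJ : ∀ v, J (J v) = -v) {P : Submodule ℝ V}
    (hP : finrank ℝ P = 2) (hJP : ∀ v ∈ P, J v ∈ P) {v : V} (hv : v ∈ P) (hv0 : v ≠ 0) :
    span ℝ {v, J v} = P := by
  have : FiniteDimensional ℝ P := finite_of_finrank_eq_succ hP
  refine Submodule.eq_of_le_of_finrank_eq (span_le.2 ?_) ?_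
  · simp [Set.insert_subset_iff, hv, hJP v hv]
  · rw [hP, ← Matrix.range_cons_cons_empty,
      finrank_span_eq_card (linearIndependent_pair_apply_of_apply_apply_eq_neg J hJ hv0)]
    simp

theorem LinearMap.BilinForm.map_eq_orthogonal {K V : Type*} [Field K] [AddCommGroup V]
    [Module K V] [FiniteDimensional K V] {B : LinearMap.BilinForm K V} (hB : B.Nondegenerate)
    (hBr : B.IsRefl) {P : Submodule K V} (hP : 2 * finrank K P = finrank K V) (f : V ≃ₗ[K] V)
    (hf : ∀ v ∈ P, ∀ w ∈ P, B (f v) w = 0) : P.map (f : V →ₗ[K] V) = B.orthogonal P := by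
  refine Submodule.eq_of_le_of_finrank_eq ?_ ?_
  · rintro _ ⟨v, hv, rfl⟩
    exact (B.mem_orthogonal_iff).2 fun w hw => hBr _ _ (hf v hv w hw)
  · rw [LinearEquiv.finrank_map_eq, finrank_orthogonal hB]
    omega

def Gform : LinearMap.BilinForm ℝ (Fin 4 → ℝ) := Matrix.toBilin' (diagonal gInv)

theorem Gform_apply (v w : Fin 4 → ℝ) : Gform v w = G v w := by
  simp [Gform, Matrix.toBilin'_apply, Fin.sum_univ_four, gInv, G, diagonal_apply]
  ring

theorem G_comm (v w : Fin 4 → ℝ) : G v w = G w v := by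
  simp only [G]; ring

theorem Gform_nondegenerate : Gform.Nondegenerate :=
  LinearMap.BilinForm.nondegenerate_toBilin'_of_det_ne_zero' _ (by
    simp [Fin.prod_univ_four, gInv])

theorem Gform_isRefl : Gform.IsRefl := fun v w h => by
  rwa [Gform_apply, G_comm, ← Gform_apply]

def J'lin : (Fin 4 → ℝ) →ₗ[ℝ] (Fin 4 → ℝ) where
  toFun := J'map
  map_add' v w := by ext i; fin_cases i <;> simp [J'map] <;> ring
  map_smul' a v := by ext i; fin_cases i <;> simp [J'map]

def K'equiv : (Fin 4 → ℝ) ≃ₗ[ℝ] (Fin 4 → ℝ) where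
  toFun v := ![-v 2, -v 3, -v 0, -v 1]
  invFun v := ![-v 2, -v 3, -v 0, -v 1]
  map_add' v w := by ext i; fin_cases i <;> simp <;> ring
  map_smul' a v := by ext i; fin_cases i <;> simp
  left_inv v := by ext i; fin_cases i <;> simp
  right_inv v := by ext i; fin_cases i <;> simp

def L'map (v : Fin 4 → ℝ) : Fin 4 → ℝ := ![-v 3, v 2, v 1, -v 0]

theorem J'map_J'map (v : Fin 4 → ℝ) : J'map (J'map v) = -v := by
  ext i; fin_cases i <;> simp [J'map]

theorem K'equiv_L'map (v : Fin 4 → ℝ) : K'equiv (L'map v) = J'map v := by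
  ext i; fin_cases i <;> simp [K'equiv, L'map, J'map]

theorem G_K'equiv_self (v : Fin 4 → ℝ) : G (K'equiv v) v = 0 := by
  simp [G, K'equiv]; ring

theorem G_K'equiv_J'map (v : Fin 4 → ℝ) : G (K'equiv v) (J'map v) = 0 := by
  simp [G, K'equiv, J'map]; ring

theorem G_L'map_self (v : Fin 4 → ℝ) : G (L'map v) v = 0 := by
  simp [G, L'map]; ring

theorem G_L'map_J'map (v : Fin 4 → ℝ) : G (L'map v) (J'map v) = 0 := by
  simp [G, L'map, J'map]; ring

def asdForm (a b c : ℝ) : Matrix (Fin 4) (Fin 4) ℝ :=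
  !![0, a, b, c; -a, 0, -c, b; -b, c, 0, a; -c, -b, -a, 0]

theorem asdForm_transpose (a b c : ℝ) : (asdForm a b c)ᵀ = -asdForm a b c := by
  ext i j; fin_cases i <;> fin_cases j <;> simp [asdForm]

theorem hodgeStar_asdForm (a b c : ℝ) : hodgeStar (asdForm a b c) = -asdForm a b c := by
  ext i j; fin_cases i <;> fin_cases j <;>
    simp [hodgeStar, asdForm, eps, gInv, Fin.sum_univ_four] <;> ring

theorem eq_asdForm_of_antiSelfDual {M : Matrix (Fin 4) (Fin 4) ℝ} (hT : Mᵀ = -M)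
    (hS : hodgeStar M = -M) : M = asdForm (M 0 1) (M 0 2) (M 0 3) := by
  have hT' (i j : Fin 4) : M j i = -M i j := by simpa using congrFun (congrFun hT i) j
  have h01 := congrFun (congrFun hS 0) 1
  have h02 := congrFun (congrFun hS 0) 2
  have h03 := congrFun (congrFun hS 0) 3
  simp [hodgeStar, eps, gInv, Fin.sum_univ_four] at h01 h02 h03
  ext i j
  fin_cases i <;> fin_cases j <;> simp [asdForm] <;>
    linarith [hT' 0 0, hT' 1 1, hT' 2 2, hT' 3 3, hT' 0 1, hT' 0 2, hT' 0 3, hT' 1 2, hT' 1 3,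
      hT' 2 3]

theorem ωval_asdForm (a b c : ℝ) (v w : Fin 4 → ℝ) :
    ωval (asdForm a b c) v w = a * G (J'map v) w + b * G (K'equiv v) w + c * G (L'map v) w := by
  simp [ωval, asdForm, G, J'map, K'equiv, L'map, Fin.sum_univ_four]; ring

theorem antiSelfDual_vanish_iff (P : Set (Fin 4 → ℝ)) :
    (∀ M : Matrix (Fin 4) (Fin 4) ℝ, Mᵀ = -M → hodgeStar M = -M →
        ∀ v ∈ P, ∀ w ∈ P, ωval M v w = 0) ↔
      ∀ v ∈ P, ∀ w ∈ P,
        G (J'map v) w = 0 ∧ G (K'equiv v) w = 0 ∧ G (L'map v) w = 0 := by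
  constructor
  · intro h v hv w hw
    have hasd (a b c : ℝ) := h _ (asdForm_transpose a b c) (hodgeStar_asdForm a b c) v hv w hw
    simp only [ωval_asdForm] at hasd
    exact ⟨by simpa using hasd 1 0 0, by simpa using hasd 0 1 0, by simpa using hasd 0 0 1⟩
  · intro h M hT hS v hv w hw
    obtain ⟨hJ, hK, hL⟩ := h v hv w hw
    rw [eq_asdForm_of_antiSelfDual hT hS, ωval_asdForm, hJ, hK, hL]
    ring

theorem J'map_mem_of_forall_G_eq_zero {P : Submodule ℝ (Fin 4 → ℝ)}
    (hP : finrank ℝ P = 2) (hK : ∀ v ∈ P, ∀ w ∈ P, G (K'equiv v) w = 0)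
    (hL : ∀ v ∈ P, ∀ w ∈ P, G (L'map v) w = 0) {v : Fin 4 → ℝ} (hv : v ∈ P) :
    J'map v ∈ P := by
  have hKP : P.map (K'equiv : (Fin 4 → ℝ) →ₗ[ℝ] (Fin 4 → ℝ)) = Gform.orthogonal P :=
    Gform.map_eq_orthogonal Gform_nondegenerate Gform_isRefl (by simp [hP]) K'equiv
      (by simpa only [Gform_apply] using hK)
  have hLv : L'map v ∈ Gform.orthogonal P := Gform.mem_orthogonal_iff.2 fun w hw => by
    rw [Gform_apply, G_comm]
    exact hL v hv w hw
  obtain ⟨u, hu, hKu⟩ := hKP ▸ hLv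
  have hJv : J'map v = u := by
    rw [← K'equiv_L'map, ← hKu]
    exact K'equiv.symm_apply_apply u
  exact hJv ▸ hu

theorem G_K'equiv_eq_zero_and_G_L'map_eq_zero {P : Submodule ℝ (Fin 4 → ℝ)}
    (hP : finrank ℝ P = 2) (hJP : ∀ v ∈ P, J'map v ∈ P) {v w : Fin 4 → ℝ}
    (hv : v ∈ P) (hw : w ∈ P) : G (K'equiv v) w = 0 ∧ G (L'map v) w = 0 := by
  rcases eq_or_ne v 0 with rfl | hv0
  · simp [G, L'map]
  rw [← Submodule.span_pair_apply_eq_of_finrank_eq_two J'lin J'map_J'map hP hJP hv hv0] at hw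
  have hvanish (u : Fin 4 → ℝ) (hu : G u v = 0) (hJu : G u (J'map v) = 0) : G u w = 0 := by
    rw [← Gform_apply]
    refine (Submodule.span_le (p := LinearMap.ker (Gform u))).2 ?_ hw
    simp [Set.insert_subset_iff, Gform_apply, J'lin, hu, hJu]
  exact ⟨hvanish _ (G_K'equiv_self v) (G_K'equiv_J'map v),
    hvanish _ (G_L'map_self v) (G_L'map_J'map v)⟩

theorem stmt9 (P : Submodule ℝ (Fin 4 → ℝ)) (hP : Module.finrank ℝ P = 2) :
    (∀ M : Matrix (Fin 4) (Fin 4) ℝ, Mᵀ = -M → hodgeStar M = -M →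
        ∀ v ∈ P, ∀ w ∈ P, ωval M v w = 0) ↔
      ((∀ v ∈ P, J'map v ∈ P) ∧ (∀ v ∈ P, ∀ w ∈ P, G v (J'map w) = 0)) := by
  refine (antiSelfDual_vanish_iff P).trans ⟨fun h => ⟨fun v hv => ?_, fun v hv w hw => ?_⟩,
    fun ⟨hJP, hLag⟩ v hv w hw => ⟨?_, G_K'equiv_eq_zero_and_G_L'map_eq_zero hP hJP hv hw⟩⟩
  · exact J'map_mem_of_forall_G_eq_zero hP (fun v hv w hw => (h v hv w hw).2.1)
      (fun v hv w hw => (h v hv w hw).2.2) hv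
  · rw [G_comm]
    exact (h w hw v hv).1
  · rw [G_comm]
    exact hLag w hw v hv
end
end

section
/- Let f: Σ → TN be an immersed surface with f^*(dξ∧dξ̄) = 0, f^*(d(ηe^{2u})∧d(η̄e^{2u})) = 0, and f^*(dξ∧d(η̄e^{2u}) - dξ̄∧d(ηe^{2u})) = 0, such that ξ is nonconstant along Σ and ηe^{2u} is nonconstant along Σ. Then locally Σ admits parameters (s,t) with ξ = s e^{iC_0} + ξ_0 and η = (t e^{iC_0} + η_0) e^{-2u} for some constant C_0 ∈ R and constants ξ_0, η_0 ∈ C. -/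
/- STATEMENT 14: an immersed surface f : Σ → TN (coordinates (ξ,η), conformal
factor e^{2u} on the base, ψ := ηe^{2u}) on which the pullbacks of dξ∧dξ̄,
dψ∧dψ̄ and dξ∧dψ̄ - dξ̄∧dψ vanish, with ξ and ψ nonconstant, locally admits
parameters (s,t) with ξ = s e^{iC₀} + ξ₀ and η = (t e^{iC₀} + η₀)e^{-2u}. -/

open Complex
open ComplexConjugate
noncomputable section

private lemma imz_mul {z w : ℂ} (hz : z.im = 0) (hw : w.im = 0) : (z*w).im = 0 := by
  simp [Complex.mul_im, hz, hw]

private lemma imz_of_mul {z w : ℂ} (h : (z*w).im = 0) (hw : w.im = 0) (hw0 : w ≠ 0) :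
    z.im = 0 := by
  have hre : w.re ≠ 0 := by
    intro h0
    exact hw0 (Complex.ext h0 hw)
  rw [Complex.mul_im, hw, mul_zero, zero_add] at h
  exact (mul_eq_zero.mp h).resolve_right hre

private lemma realpart_eq {z : ℂ} (h : z.im = 0) : (z.re : ℂ) = z := by
  apply Complex.ext <;> simp [h]

private lemma eq_real_mul {A C : ℂ} (h : (A * conj C).im = 0) (hC : C ≠ 0) :
    A = (((A * conj C).re / Complex.normSq C : ℝ) : ℂ) * C := by
  have h2 : (Complex.normSq C : ℂ) ≠ 0 := by
    simpa using (Complex.normSq_pos.mpr hC).ne'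
  have key : A * (Complex.normSq C : ℂ) = ((A * conj C).re : ℂ) * C := by
    rw [realpart_eq h, ← Complex.mul_conj]
    ring
  rw [Complex.ofReal_div, div_mul_eq_mul_div, eq_div_iff h2]
  linear_combination key

private lemma conj_im_zero {z : ℂ} (h : z.im = 0) : ((starRingEnd ℂ) z).im = 0 := by
  simp [h]

private lemma cross_real {A B C D : ℂ} (h1 : (A * conj B).im = 0) (h2 : (C * conj D).im = 0)
    (h3 : (A * conj D - B * conj C).im = 0) (hK : A * conj D - B * conj C ≠ 0) :
    (A * conj C).im = 0 ∧ (A * conj D).im = 0 ∧ (B * conj C).im = 0 ∧ (B * conj D).im = 0 := by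
  set P := A * conj D with hP
  set Q := B * conj C with hQ
  have hPQ : (P * conj Q).im = 0 := by
    have e : P * conj Q = (A * conj B) * (C * conj D) := by
      simp only [hP, hQ, map_mul, Complex.conj_conj]
      ring
    rw [e]; exact imz_mul h1 h2
  have him : P.im = Q.im := by
    rw [Complex.sub_im] at h3; linarith
  have hre : P.re ≠ Q.re := by
    intro h
    exact hK (by apply Complex.ext <;> simp [Complex.sub_re, Complex.sub_im, h, him])
  have hm : P.im = 0 := by
    rw [Complex.mul_im, Complex.conj_re, Complex.conj_im] at hPQ
    have : P.im * (Q.re - P.re) = 0 := by rw [him] at hPQ ⊢; linarith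
    rcases mul_eq_zero.mp this with h | h
    · exact h
    · exact absurd (by linarith : P.re = Q.re) hre
  have hq : Q.im = 0 := by rw [← him]; exact hm
  refine ⟨?_, hm, hq, ?_⟩
  · by_cases hp0 : P = 0
    · have hq0 : Q ≠ 0 := fun h => hK (by rw [hp0, h, sub_zero])
      have key : ((A * conj C) * conj Q).im = 0 := by
        have e : (A * conj C) * conj Q = (Complex.normSq C : ℂ) * (A * conj B) := by
          simp only [hQ, map_mul, Complex.conj_conj]; rw [← Complex.mul_conj]
          ring
        rw [e]; exact imz_mul (by simp) h1
      have key2 : ((A * conj C) * Q).im = 0 := by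
        rwa [Complex.conj_eq_iff_im.mpr hq] at key
      exact imz_of_mul key2 hq hq0
    · have key : ((A * conj C) * conj P).im = 0 := by
        have e : (A * conj C) * conj P = (Complex.normSq A : ℂ) * conj (C * conj D) := by
          simp only [hP, map_mul, Complex.conj_conj]; rw [← Complex.mul_conj]
          ring
        rw [e]; exact imz_mul (by simp) (conj_im_zero h2)
      have key2 : ((A * conj C) * P).im = 0 := by
        rwa [Complex.conj_eq_iff_im.mpr hm] at key
      exact imz_of_mul key2 hm hp0
  · by_cases hp0 : P = 0
    · have hq0 : Q ≠ 0 := fun h => hK (by rw [hp0, h, sub_zero])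
      have key : ((B * conj D) * conj Q).im = 0 := by
        have e : (B * conj D) * conj Q = (Complex.normSq B : ℂ) * (C * conj D) := by
          simp only [hQ, map_mul, Complex.conj_conj]; rw [← Complex.mul_conj]
          ring
        rw [e]; exact imz_mul (by simp) h2
      have key2 : ((B * conj D) * Q).im = 0 := by
        rwa [Complex.conj_eq_iff_im.mpr hq] at key
      exact imz_of_mul key2 hq hq0
    · have key : ((B * conj D) * conj P).im = 0 := by
        have e : (B * conj D) * conj P = (Complex.normSq D : ℂ) * conj (A * conj B) := by
          simp only [hP, map_mul, Complex.conj_conj]; rw [← Complex.mul_conj]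
          ring
        rw [e]; exact imz_mul (by simp) (conj_im_zero h1)
      have key2 : ((B * conj D) * P).im = 0 := by
        rwa [Complex.conj_eq_iff_im.mpr hm] at key
      exact imz_of_mul key2 hm hp0

private lemma kernel_exists {A B C D : ℂ} (h1 : (A * conj B).im = 0) (h2 : (C * conj D).im = 0)
    (hK : A * conj D - B * conj C = 0) :
    ∃ v : ℝ × ℝ, v ≠ 0 ∧ (v.1 : ℂ) * A + (v.2 : ℂ) * B = 0 ∧
      (v.1 : ℂ) * C + (v.2 : ℂ) * D = 0 := by
  by_cases hD : D = 0
  · by_cases hC : C = 0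
    · by_cases hB : B = 0
      · exact ⟨(0, 1), by simp, by simp [hB], by simp [hC, hD]⟩
      · refine ⟨(Complex.normSq B, -(A * conj B).re), ?_, ?_, by simp [hC, hD]⟩
        · intro h
          rw [Prod.ext_iff] at h
          exact hB (Complex.normSq_eq_zero.mp h.1)
        · push_cast
          rw [realpart_eq h1, ← Complex.mul_conj]
          ring
    · have hB : B = 0 := by
        have h0 : B * conj C = 0 := by rw [hD] at hK; simpa using hK
        rcases mul_eq_zero.mp h0 with h | h
        · exact h
        · exact absurd (by simpa using h) hC
      exact ⟨(0, 1), by simp, by simp [hB], by simp [hD]⟩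
  · refine ⟨(Complex.normSq D, -(C * conj D).re), ?_, ?_, ?_⟩
    · intro h
      rw [Prod.ext_iff] at h
      exact hD (Complex.normSq_eq_zero.mp h.1)
    · push_cast
      rw [realpart_eq h2, ← Complex.mul_conj]
      have hDC : D * conj C = C * conj D := by
        have e : D * conj C = conj (C * conj D) := by rw [map_mul, Complex.conj_conj]; ring
        rw [e, Complex.conj_eq_iff_im.mpr h2]
      have hK' : A * conj D = B * conj C := by linear_combination hK
      calc D * conj D * A + -(C * conj D) * B
          = D * (A * conj D) - (C * conj D) * B := by ring
        _ = D * (B * conj C) - (C * conj D) * B := by rw [hK']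
        _ = B * (D * conj C - C * conj D) := by ring
        _ = 0 := by rw [hDC]; ring
    · push_cast
      rw [realpart_eq h2, ← Complex.mul_conj]
      ring

private lemma clm_decomp (L : ℝ × ℝ →L[ℝ] ℂ) (v : ℝ × ℝ) :
    L v = (v.1 : ℂ) * L (1, 0) + (v.2 : ℂ) * L (0, 1) := by
  have h : v = v.1 • ((1 : ℝ), (0 : ℝ)) + v.2 • ((0 : ℝ), (1 : ℝ)) := by
    ext <;> simp
  conv_lhs => rw [h]
  rw [L.map_add, L.map_smul, L.map_smul]
  simp [Complex.real_smul]

private lemma comb_real {X A B : ℂ} (v₁ v₂ : ℝ)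
    (hXA : (X * conj A).im = 0) (hXB : (X * conj B).im = 0) :
    (X * conj ((v₁ : ℂ) * A + (v₂ : ℂ) * B)).im = 0 := by
  simp only [map_add, map_mul, Complex.conj_ofReal]
  have h : X * ((v₁ : ℂ) * conj A + (v₂ : ℂ) * conj B)
      = (v₁ : ℂ) * (X * conj A) + (v₂ : ℂ) * (X * conj B) := by ring
  rw [h]
  simp [Complex.add_im, Complex.mul_im, hXA, hXB]

private lemma comb_real' {X A B : ℂ} (v₁ v₂ : ℝ)
    (hXA : (A * conj X).im = 0) (hXB : (B * conj X).im = 0) :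
    (((v₁ : ℂ) * A + (v₂ : ℂ) * B) * conj X).im = 0 := by
  have h : ((v₁ : ℂ) * A + (v₂ : ℂ) * B) * conj X
      = (v₁ : ℂ) * (A * conj X) + (v₂ : ℂ) * (B * conj X) := by ring
  rw [h]
  simp [Complex.add_im, Complex.mul_im, hXA, hXB]

private lemma collinear_trans {x C z : ℂ} (h1 : (x * conj C).im = 0)
    (h2 : (C * conj z).im = 0) (hC : C ≠ 0) : (x * conj z).im = 0 := by
  rw [eq_real_mul h1 hC, mul_assoc]
  simp [Complex.mul_im, h2]

private lemma const_of_deriv_zero {s : Set (ℝ × ℝ)} (hs : IsOpen s) (hconv : Convex ℝ s)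
    {f : ℝ × ℝ → ℝ} (hf : ∀ p ∈ s, HasFDerivAt f (0 : ℝ × ℝ →L[ℝ] ℝ) p) {x y : ℝ × ℝ}
    (hx : x ∈ s) (hy : y ∈ s) : f x = f y := by
  apply hconv.is_const_of_fderivWithin_eq_zero (𝕜 := ℝ) ?_ ?_ hx hy
  · exact fun p hp => (hf p hp).differentiableAt.differentiableWithinAt
  · intro p hp
    rw [fderivWithin_eq_fderiv (hs.uniqueDiffWithinAt hp) (hf p hp).differentiableAt]
    exact (hf p hp).fderiv

private lemma im_prod_deriv_zero {Uo : Set (ℝ × ℝ)} (hUo : IsOpen Uo) {F G : ℝ × ℝ → ℂ}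
    {F' G' : ℝ × ℝ →L[ℝ] ℂ} {p : ℝ × ℝ} (hp : p ∈ Uo)
    (hF : HasFDerivAt F F' p) (hG : HasFDerivAt G G' p)
    (hzero : ∀ q ∈ Uo, (F q * conj (G q)).im = 0) (w : ℝ × ℝ) :
    (F p * conj (G' w) + conj (G p) * (F' w)).im = 0 := by
  have hconj : HasFDerivAt (fun q => conj (G q))
      ((Complex.conjCLE : ℂ ≃L[ℝ] ℂ).toContinuousLinearMap.comp G') p :=
    (Complex.conjCLE : ℂ ≃L[ℝ] ℂ).toContinuousLinearMap.hasFDerivAt.comp p hG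
  have hmul := hF.mul hconj
  have him : HasFDerivAt (fun q => (F q * conj (G q)).im)
      (Complex.imCLM.comp (F p • (Complex.conjCLE : ℂ ≃L[ℝ] ℂ).toContinuousLinearMap.comp G'
        + conj (G p) • F')) p := Complex.imCLM.hasFDerivAt.comp p hmul
  have hev : (fun q => (F q * conj (G q)).im) =ᶠ[nhds p] (fun _ => (0 : ℝ)) :=
    Filter.eventuallyEq_of_mem (hUo.mem_nhds hp) hzero
  have h0 : fderiv ℝ (fun q => (F q * conj (G q)).im) p = 0 := by
    rw [hev.fderiv_eq]
    exact fderiv_const_apply 0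
  have hd := him.fderiv
  rw [h0] at hd
  have := congrArg (fun (L : ℝ × ℝ →L[ℝ] ℝ) => L w) hd.symm
  simpa using this

private lemma im_zero_of_sub_conj {z : ℂ} (h : z - conj z = 0) : z.im = 0 :=
  Complex.conj_eq_iff_im.mp (by linear_combination -h)

private lemma im_swap {z w : ℂ} (h : (z * conj w).im = 0) : (w * conj z).im = 0 := by
  have e : w * conj z = conj (z * conj w) := by rw [map_mul, Complex.conj_conj]; ring
  rw [e, Complex.conj_im, h, neg_zero]

private lemma second_deriv_stuff {Uo : Set (ℝ × ℝ)} (hUo : IsOpen Uo) {f : ℝ × ℝ → ℂ}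
    (hf : ContDiffOn ℝ 2 f Uo) {p : ℝ × ℝ} (hp : p ∈ Uo) (w : ℝ × ℝ) :
    HasFDerivAt (fun q => fderiv ℝ f q w) ((fderiv ℝ (fderiv ℝ f) p).flip w) p ∧
      (∀ v v', fderiv ℝ (fderiv ℝ f) p v v' = fderiv ℝ (fderiv ℝ f) p v' v) := by
  have hD1 : ContDiffOn ℝ 1 (fderiv ℝ f) Uo := hf.fderiv_of_isOpen hUo (by norm_num)
  have hDd : DifferentiableAt ℝ (fderiv ℝ f) p :=
    (hD1.differentiableOn (by norm_num)).differentiableAt (hUo.mem_nhds hp)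
  have hev : ∀ᶠ q in nhds p, HasFDerivAt f (fderiv ℝ f q) q := by
    filter_upwards [hUo.mem_nhds hp] with q hq
    exact ((hf.differentiableOn (by norm_num)).differentiableAt (hUo.mem_nhds hq)).hasFDerivAt
  refine ⟨?_, fun v v' => second_derivative_symmetric_of_eventually hev hDd.hasFDerivAt v v'⟩
  have h := hDd.hasFDerivAt.clm_apply (hasFDerivAt_const w p)
  simpa using h

private lemma real_mul_im (r : ℝ) (z w : ℂ) : ((↑r * z) * w).im = r * (z * w).im := by
  rw [mul_assoc, Complex.mul_im]
  simp

set_option maxHeartbeats 2000000 in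
theorem stmt14
    (U : Set (ℝ × ℝ)) (hU : IsOpen U)
    (u : ℂ → ℝ) (hu : ContDiff ℝ (⊤ : ℕ∞) u)
    (ξ η : ℝ × ℝ → ℂ)
    (hξ : ContDiffOn ℝ (⊤ : ℕ∞) ξ U) (hη : ContDiffOn ℝ (⊤ : ℕ∞) η U)
    (ψ : ℝ × ℝ → ℂ) (hψ : ∀ p, ψ p = η p * (Real.exp (2 * u (ξ p)) : ℝ))
    -- f = (ξ,η) is an immersion on U
    (himm : ∀ p ∈ U, Function.Injective
      (fun v : ℝ × ℝ => (fderiv ℝ ξ p v, fderiv ℝ η p v)))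
    -- f*(dξ∧dξ̄) = 0
    (h1 : ∀ p ∈ U,
      fderiv ℝ ξ p (1, 0) * (starRingEnd ℂ) (fderiv ℝ ξ p (0, 1))
        - fderiv ℝ ξ p (0, 1) * (starRingEnd ℂ) (fderiv ℝ ξ p (1, 0)) = 0)
    -- f*(d(ηe^{2u})∧d(η̄e^{2u})) = 0
    (h2 : ∀ p ∈ U,
      fderiv ℝ ψ p (1, 0) * (starRingEnd ℂ) (fderiv ℝ ψ p (0, 1))
        - fderiv ℝ ψ p (0, 1) * (starRingEnd ℂ) (fderiv ℝ ψ p (1, 0)) = 0)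
    -- f*(dξ∧d(η̄e^{2u}) - dξ̄∧d(ηe^{2u})) = 0
    (h3 : ∀ p ∈ U,
      (fderiv ℝ ξ p (1, 0) * (starRingEnd ℂ) (fderiv ℝ ψ p (0, 1))
        - fderiv ℝ ξ p (0, 1) * (starRingEnd ℂ) (fderiv ℝ ψ p (1, 0)))
      - ((starRingEnd ℂ) (fderiv ℝ ξ p (1, 0)) * fderiv ℝ ψ p (0, 1)
        - (starRingEnd ℂ) (fderiv ℝ ξ p (0, 1)) * fderiv ℝ ψ p (1, 0)) = 0)
    -- ξ and ηe^{2u} are nonconstant along Σ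
    (hξnc : ¬ ∃ c : ℂ, ∀ p ∈ U, ξ p = c)
    (hψnc : ¬ ∃ c : ℂ, ∀ p ∈ U, ψ p = c)
    (p₀ : ℝ × ℝ) (hp₀ : p₀ ∈ U) :
    ∃ (C₀ : ℝ) (ξ₀ η₀ : ℂ) (V : Set (ℝ × ℝ)) (φ : ℝ × ℝ → ℝ × ℝ) (q₀ : ℝ × ℝ),
      IsOpen V ∧ q₀ ∈ V ∧ φ q₀ = p₀ ∧ ContinuousOn φ V ∧ Set.InjOn φ V ∧
      Set.MapsTo φ V U ∧ IsOpen (φ '' V) ∧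
      ∀ q ∈ V,
        ξ (φ q) = (q.1 : ℂ) * exp (I * C₀) + ξ₀ ∧
        η (φ q) = ((q.2 : ℂ) * exp (I * C₀) + η₀) *
          (Real.exp (-(2 * u (ξ (φ q)))) : ℝ) := by
  classical
  -- ψ is smooth on U
  have hψfun : ψ = fun p => η p * ((Real.exp (2 * u (ξ p)) : ℝ) : ℂ) := funext hψ
  have huξ : ContDiffOn ℝ (⊤ : ℕ∞) (fun p => u (ξ p)) U := hu.comp_contDiffOn hξ
  have hEc : ContDiffOn ℝ (⊤ : ℕ∞) (fun p => ((Real.exp (2 * u (ξ p)) : ℝ) : ℂ)) U := by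
    apply Complex.ofRealCLM.contDiff.comp_contDiffOn
    apply Real.contDiff_exp.comp_contDiffOn
    exact contDiffOn_const.mul huξ
  have hψC : ContDiffOn ℝ (⊤ : ℕ∞) ψ U := by rw [hψfun]; exact hη.mul hEc
  -- basic differentiability
  have hdξ : ∀ p ∈ U, HasFDerivAt ξ (fderiv ℝ ξ p) p := fun p hp =>
    ((hξ.differentiableOn (by simp)).differentiableAt (hU.mem_nhds hp)).hasFDerivAt
  have hdη : ∀ p ∈ U, HasFDerivAt η (fderiv ℝ η p) p := fun p hp =>
    ((hη.differentiableOn (by simp)).differentiableAt (hU.mem_nhds hp)).hasFDerivAt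
  have hdψ : ∀ p ∈ U, HasFDerivAt ψ (fderiv ℝ ψ p) p := fun p hp =>
    ((hψC.differentiableOn (by simp)).differentiableAt (hU.mem_nhds hp)).hasFDerivAt
  -- joint injectivity of (dξ, dψ)
  have hinj : ∀ p ∈ U, ∀ v : ℝ × ℝ,
      fderiv ℝ ξ p v = 0 → fderiv ℝ ψ p v = 0 → v = 0 := by
    intro p hp v hv1 hv2
    have hcu : HasFDerivAt (fun q => u (ξ q))
        ((fderiv ℝ u (ξ p)).comp (fderiv ℝ ξ p)) p :=
      ((hu.differentiable (by simp)).differentiableAt.hasFDerivAt).comp p (hdξ p hp)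
    have hc2 := hcu.const_mul (2 : ℝ)
    have hc3 := hc2.exp
    have hc4 := Complex.ofRealCLM.hasFDerivAt.comp p hc3
    have hc5 : HasFDerivAt ψ
        (η p • (Complex.ofRealCLM.comp
            (Real.exp (2 * u (ξ p)) • ((2 : ℝ) • ((fderiv ℝ u (ξ p)).comp (fderiv ℝ ξ p)))))
          + ((Real.exp (2 * u (ξ p)) : ℝ) : ℂ) • fderiv ℝ η p) p := by
      rw [hψfun]
      exact (hdη p hp).mul hc4
    have hfd := hc5.fderiv
    have hval := congrArg (fun (L : ℝ × ℝ →L[ℝ] ℂ) => L v) hfd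
    simp only [ContinuousLinearMap.add_apply, ContinuousLinearMap.smul_apply,
      ContinuousLinearMap.comp_apply, hv1, hv2, map_zero, smul_zero] at hval
    -- hval : 0 = η p • 0 + exp • fderiv η p v  (after hv1 kills inner term)
    have hη0 : fderiv ℝ η p v = 0 := by
      have hexp : ((Real.exp (2 * u (ξ p)) : ℝ) : ℂ) ≠ 0 := by
        simp [Real.exp_ne_zero]
      rw [eq_comm] at hval
      simp only [smul_eq_mul, zero_add] at hval
      rcases mul_eq_zero.mp hval with h | h
      · exact absurd h hexp
      · exact h
    have := himm p hp (a₁ := v) (a₂ := 0) (by simp [hv1, hη0])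
    exact this
  -- partial-derivative functions
  set mA : ℝ × ℝ → ℂ := fun p => fderiv ℝ ξ p (1, 0) with hmAdef
  set mB : ℝ × ℝ → ℂ := fun p => fderiv ℝ ξ p (0, 1) with hmBdef
  set mC : ℝ × ℝ → ℂ := fun p => fderiv ℝ ψ p (1, 0) with hmCdef
  set mD : ℝ × ℝ → ℂ := fun p => fderiv ℝ ψ p (0, 1) with hmDdef
  have h1im : ∀ p ∈ U, (mA p * conj (mB p)).im = 0 := by
    intro p hp
    apply im_zero_of_sub_conj
    have := h1 p hp
    simp only [map_mul, Complex.conj_conj]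
    linear_combination this
  have h2im : ∀ p ∈ U, (mC p * conj (mD p)).im = 0 := by
    intro p hp
    apply im_zero_of_sub_conj
    have := h2 p hp
    simp only [map_mul, Complex.conj_conj]
    linear_combination this
  have h3im : ∀ p ∈ U, (mA p * conj (mD p) - mB p * conj (mC p)).im = 0 := by
    intro p hp
    apply im_zero_of_sub_conj
    have := h3 p hp
    simp only [map_sub, map_mul, Complex.conj_conj]
    linear_combination this
  -- decomposition of derivatives
  have hdecξ : ∀ p, ∀ v : ℝ × ℝ,
      fderiv ℝ ξ p v = (v.1 : ℂ) * mA p + (v.2 : ℂ) * mB p := fun p v =>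
    clm_decomp (fderiv ℝ ξ p) v
  have hdecψ : ∀ p, ∀ v : ℝ × ℝ,
      fderiv ℝ ψ p v = (v.1 : ℂ) * mC p + (v.2 : ℂ) * mD p := fun p v =>
    clm_decomp (fderiv ℝ ψ p) v
  -- the mixed determinant is everywhere nonzero
  have hKne : ∀ p ∈ U, mA p * conj (mD p) - mB p * conj (mC p) ≠ 0 := by
    intro p hp hK0
    obtain ⟨v, hv, hvA, hvC⟩ := kernel_exists (h1im p hp) (h2im p hp) hK0
    exact hv (hinj p hp v (by rw [hdecξ]; exact hvA) (by rw [hdecψ]; exact hvC))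
  have hcross : ∀ p ∈ U, (mA p * conj (mC p)).im = 0 ∧ (mA p * conj (mD p)).im = 0 ∧
      (mB p * conj (mC p)).im = 0 ∧ (mB p * conj (mD p)).im = 0 := fun p hp =>
    cross_real (h1im p hp) (h2im p hp) (h3im p hp) (hKne p hp)
  -- choice of direction v₀
  have hv₀ex : ∃ v₀ : ℝ × ℝ, fderiv ℝ ξ p₀ v₀ ≠ 0 := by
    by_cases hA : mA p₀ = 0
    · refine ⟨(0, 1), ?_⟩
      intro hB
      apply hKne p₀ hp₀
      have hA' : mA p₀ = 0 := hA
      have hB' : mB p₀ = 0 := hB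
      rw [hA', hB']
      ring
    · exact ⟨(1, 0), hA⟩
  obtain ⟨v₀, hv₀⟩ := hv₀ex
  set Cf : ℝ × ℝ → ℂ := fun p => fderiv ℝ ξ p v₀ with hCfdef
  -- everything is real against Cf
  have hselfA : ∀ p, (mA p * conj (mA p)).im = 0 := fun p => by simp [Complex.mul_conj]
  have hselfB : ∀ p, (mB p * conj (mB p)).im = 0 := fun p => by simp [Complex.mul_conj]
  have hCfA : ∀ p ∈ U, (mA p * conj (Cf p)).im = 0 := by
    intro p hp
    rw [hCfdef]
    simp only [hdecξ p v₀]
    exact comb_real _ _ (hselfA p) (h1im p hp)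
  have hCfB : ∀ p ∈ U, (mB p * conj (Cf p)).im = 0 := by
    intro p hp
    rw [hCfdef]
    simp only [hdecξ p v₀]
    exact comb_real _ _ (im_swap (h1im p hp)) (hselfB p)
  have hCfC : ∀ p ∈ U, (mC p * conj (Cf p)).im = 0 := by
    intro p hp
    rw [hCfdef]
    simp only [hdecξ p v₀]
    exact comb_real _ _ (im_swap (hcross p hp).1) (im_swap (hcross p hp).2.2.1)
  have hCfD : ∀ p ∈ U, (mD p * conj (Cf p)).im = 0 := by
    intro p hp
    rw [hCfdef]
    simp only [hdecξ p v₀]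
    exact comb_real _ _ (im_swap (hcross p hp).2.1) (im_swap (hcross p hp).2.2.2)
  have hξ2 : ContDiffOn ℝ 2 ξ U := hξ.of_le (WithTop.coe_le_coe.mpr le_top)
  have hψ2 : ContDiffOn ℝ 2 ψ U := hψC.of_le (WithTop.coe_le_coe.mpr le_top)
  have hsdξ := fun (p : ℝ × ℝ) (hp : p ∈ U) (w : ℝ × ℝ) => second_deriv_stuff hU hξ2 hp w
  have hsdψ := fun (p : ℝ × ℝ) (hp : p ∈ U) (w : ℝ × ℝ) => second_deriv_stuff hU hψ2 hp w
  have key1 : ∀ p ∈ U,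
      (conj (mA p) * (fderiv ℝ (fderiv ℝ ξ) p (0, 1) v₀)).im
        = (conj (mB p) * (fderiv ℝ (fderiv ℝ ξ) p (1, 0) v₀)).im := by
    intro p hp
    have eA := im_prod_deriv_zero hU hp (hsdξ p hp v₀).1 (hsdξ p hp (1, 0)).1
      (fun q hq => im_swap (hCfA q hq)) (0, 1)
    have eB := im_prod_deriv_zero hU hp (hsdξ p hp v₀).1 (hsdξ p hp (0, 1)).1
      (fun q hq => im_swap (hCfB q hq)) (1, 0)
    have hsym := (hsdξ p hp 0).2 (0, 1) (1, 0)
    simp only [ContinuousLinearMap.flip_apply] at eA eB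
    rw [Complex.add_im] at eA eB
    rw [hsym] at eA
    linarith
  have key2 : ∀ p ∈ U,
      (conj (mC p) * (fderiv ℝ (fderiv ℝ ξ) p (0, 1) v₀)).im
        = (conj (mD p) * (fderiv ℝ (fderiv ℝ ξ) p (1, 0) v₀)).im := by
    intro p hp
    have eC := im_prod_deriv_zero hU hp (hsdξ p hp v₀).1 (hsdψ p hp (1, 0)).1
      (fun q hq => im_swap (hCfC q hq)) (0, 1)
    have eD := im_prod_deriv_zero hU hp (hsdξ p hp v₀).1 (hsdψ p hp (0, 1)).1
      (fun q hq => im_swap (hCfD q hq)) (1, 0)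
    have hsym := (hsdψ p hp 0).2 (0, 1) (1, 0)
    simp only [ContinuousLinearMap.flip_apply] at eC eD
    rw [Complex.add_im] at eC eD
    rw [hsym] at eC
    linarith
  -- the ball on which we work
  set z₀ : ℂ := fderiv ℝ ξ p₀ v₀ with hz₀def
  have hz₀ : z₀ ≠ 0 := hv₀
  have hCf1 : ContDiffOn ℝ 1 Cf U :=
    (hξ2.fderiv_of_isOpen hU (by norm_num)).clm_apply contDiffOn_const
  have hWopen : IsOpen (U ∩ Cf ⁻¹' {z : ℂ | 0 < (z * conj z₀).re}) := by
    apply hCf1.continuousOn.isOpen_inter_preimage hU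
    exact isOpen_lt continuous_const (Complex.continuous_re.comp (continuous_id.mul continuous_const))
  have hp₀W : p₀ ∈ U ∩ Cf ⁻¹' {z : ℂ | 0 < (z * conj z₀).re} := by
    refine ⟨hp₀, ?_⟩
    show 0 < (Cf p₀ * conj z₀).re
    have : Cf p₀ = z₀ := rfl
    rw [this, Complex.mul_conj]
    simpa using Complex.normSq_pos.mpr hz₀
  obtain ⟨ε, hε, hball⟩ := Metric.isOpen_iff.mp hWopen p₀ hp₀W
  set Bl : Set (ℝ × ℝ) := Metric.ball p₀ ε with hBldef
  have hBlopen : IsOpen Bl := Metric.isOpen_ball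
  have hBlconv : Convex ℝ Bl := convex_ball p₀ ε
  have hBlU : Bl ⊆ U := fun p hp => (hball hp).1
  have hp₀Bl : p₀ ∈ Bl := Metric.mem_ball_self hε
  have hBpos : ∀ p ∈ Bl, 0 < (Cf p * conj z₀).re := fun p hp => (hball hp).2
  have hCfne : ∀ p ∈ Bl, Cf p ≠ 0 := by
    intro p hp h0
    have := hBpos p hp
    rw [h0] at this
    simp at this
  -- the direction derivative of Cf stays in the line of Cf
  have hn : ∀ p ∈ Bl, ∀ w : ℝ × ℝ,
      ((fderiv ℝ (fderiv ℝ ξ) p w v₀) * conj (Cf p)).im = 0 := by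
    intro p hpB
    have hp : p ∈ U := hBlU hpB
    have hCfp := hCfne p hpB
    obtain ⟨a, hAeq⟩ : ∃ a : ℝ, mA p = (a : ℂ) * Cf p :=
      ⟨_, eq_real_mul (hCfA p hp) hCfp⟩
    obtain ⟨b, hBeq⟩ : ∃ b : ℝ, mB p = (b : ℂ) * Cf p :=
      ⟨_, eq_real_mul (hCfB p hp) hCfp⟩
    obtain ⟨c, hCeq⟩ : ∃ c : ℝ, mC p = (c : ℂ) * Cf p :=
      ⟨_, eq_real_mul (hCfC p hp) hCfp⟩
    obtain ⟨d, hDeq⟩ : ∃ d : ℝ, mD p = (d : ℂ) * Cf p :=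
      ⟨_, eq_real_mul (hCfD p hp) hCfp⟩
    have hdet : a * d - b * c ≠ 0 := by
      intro h0
      apply hKne p hp
      have e1 : mA p * conj (mD p) - mB p * conj (mC p)
          = ((a * d - b * c : ℝ) : ℂ) * (Cf p * conj (Cf p)) := by
        rw [hAeq, hBeq, hCeq, hDeq]
        simp only [map_mul, Complex.conj_ofReal]
        push_cast
        ring
      rw [e1, h0]
      simp
    set n₁ : ℝ := (conj (Cf p) * (fderiv ℝ (fderiv ℝ ξ) p (1, 0) v₀)).im with hn₁def
    set n₂ : ℝ := (conj (Cf p) * (fderiv ℝ (fderiv ℝ ξ) p (0, 1) v₀)).im with hn₂def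
    have hq1 : a * n₂ - b * n₁ = 0 := by
      have h := key1 p hp
      rw [hAeq, hBeq] at h
      simp only [map_mul, Complex.conj_ofReal] at h
      rw [real_mul_im, real_mul_im] at h
      linarith
    have hq2 : c * n₂ - d * n₁ = 0 := by
      have h := key2 p hp
      rw [hCeq, hDeq] at h
      simp only [map_mul, Complex.conj_ofReal] at h
      rw [real_mul_im, real_mul_im] at h
      linarith
    have hn₁ : n₁ = 0 := by
      have : (a * d - b * c) * n₁ = 0 := by linear_combination c * hq1 - a * hq2
      exact (mul_eq_zero.mp this).resolve_left hdet
    have hn₂ : n₂ = 0 := by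
      have : (a * d - b * c) * n₂ = 0 := by linear_combination d * hq1 - b * hq2
      exact (mul_eq_zero.mp this).resolve_left hdet
    intro w
    have hdec := clm_decomp ((fderiv ℝ (fderiv ℝ ξ) p).flip v₀) w
    simp only [ContinuousLinearMap.flip_apply] at hdec
    rw [hdec]
    apply comb_real'
    · rw [mul_comm]; exact hn₁
    · rw [mul_comm]; exact hn₂
  -- Cf stays on the line of z₀ throughout the ball
  have him0 : ∀ p ∈ Bl, (Cf p * conj z₀).im = 0 := by
    have hg0 : ∀ p ∈ Bl, HasFDerivAt
        (fun q => (Cf q * conj z₀).im * ((Cf q * conj z₀).re)⁻¹) (0 : ℝ × ℝ →L[ℝ] ℝ) p := by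
      intro p hpB
      have hp := hBlU hpB
      have hposp := hBpos p hpB
      have hnep : (Cf p * conj z₀).re ≠ 0 := ne_of_gt hposp
      have hF := (hsdξ p hp v₀).1
      have hh := hF.mul_const (conj z₀)
      have hnum := Complex.imCLM.hasFDerivAt.comp p hh
      have hden := Complex.reCLM.hasFDerivAt.comp p hh
      have hinv := (hasDerivAt_inv hnep).comp_hasFDerivAt p hden
      have hg := hnum.mul hinv
      have hzero : ((Cf p * conj z₀).im •
            (-((Cf p * conj z₀).re ^ 2)⁻¹ •
              (Complex.reCLM.comp ((starRingEnd ℂ) z₀ • (fderiv ℝ (fderiv ℝ ξ) p).flip v₀)))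
          + ((Cf p * conj z₀).re)⁻¹ •
              (Complex.imCLM.comp ((starRingEnd ℂ) z₀ • (fderiv ℝ (fderiv ℝ ξ) p).flip v₀)))
          = (0 : ℝ × ℝ →L[ℝ] ℝ) := by
        refine ContinuousLinearMap.ext fun w => ?_
        have hkey0 := hn p hpB w
        simp only [ContinuousLinearMap.add_apply, ContinuousLinearMap.smul_apply,
          ContinuousLinearMap.coe_comp', Function.comp_apply, ContinuousLinearMap.flip_apply,
          Complex.imCLM_apply, Complex.reCLM_apply, smul_eq_mul,
          ContinuousLinearMap.zero_apply]
        set X : ℂ := fderiv ℝ (fderiv ℝ ξ) p w v₀ with hXdef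
        set Z : ℂ := Cf p with hZdef
        have hcc : (starRingEnd ℂ) z₀ * X = X * conj z₀ := mul_comm _ _
        rw [hcc]
        have hkey2 : (Z * conj z₀).re * (X * conj z₀).im
            - (Z * conj z₀).im * (X * conj z₀).re = 0 := by
          have e : (X * conj z₀) * conj (Z * conj z₀)
              = (X * conj Z) * ((Complex.normSq z₀ : ℝ) : ℂ) := by
            rw [map_mul, Complex.conj_conj, ← Complex.mul_conj]
            ring
          have e2 : ((X * conj z₀) * conj (Z * conj z₀)).im = 0 := by
            rw [e]; exact imz_mul hkey0 (by simp)
          rw [Complex.mul_im, Complex.conj_re, Complex.conj_im] at e2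
          linarith
        set nu : ℝ := (Z * conj z₀).im with hnu
        set de : ℝ := (Z * conj z₀).re with hde
        set xr : ℝ := (X * conj z₀).re with hxr
        set xi : ℝ := (X * conj z₀).im with hxi
        have h2 : de ≠ 0 := hnep
        field_simp
        linear_combination hkey2
      rw [← hzero]
      exact hg
    intro p hpB
    have hconst := const_of_deriv_zero hBlopen hBlconv hg0 hpB hp₀Bl
    have hg₀0 : (Cf p₀ * conj z₀).im * ((Cf p₀ * conj z₀).re)⁻¹ = 0 := by
      have hcf : Cf p₀ = z₀ := rfl
      rw [hcf, Complex.mul_conj]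
      simp
    rw [hg₀0] at hconst
    rcases mul_eq_zero.mp hconst with h | h
    · exact h
    · exact absurd h (inv_ne_zero (ne_of_gt (hBpos p hpB)))
  -- all first derivatives lie on the line of z₀
  have hlineξ : ∀ p ∈ Bl, ∀ w : ℝ × ℝ, (fderiv ℝ ξ p w * conj z₀).im = 0 := by
    intro p hpB w
    have hp := hBlU hpB
    rw [hdecξ p w]
    exact comb_real' _ _ (collinear_trans (hCfA p hp) (him0 p hpB) (hCfne p hpB))
      (collinear_trans (hCfB p hp) (him0 p hpB) (hCfne p hpB))
  have hlineψ : ∀ p ∈ Bl, ∀ w : ℝ × ℝ, (fderiv ℝ ψ p w * conj z₀).im = 0 := by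
    intro p hpB w
    have hp := hBlU hpB
    rw [hdecψ p w]
    exact comb_real' _ _ (collinear_trans (hCfC p hp) (him0 p hpB) (hCfne p hpB))
      (collinear_trans (hCfD p hp) (him0 p hpB) (hCfne p hpB))
  -- the constant direction e = exp(I C₀)
  set C₀ : ℝ := Complex.arg z₀ with hC₀def
  set e : ℂ := Complex.exp (Complex.I * (C₀ : ℂ)) with hedef
  have he : ((‖z₀‖ : ℝ) : ℂ) * e = z₀ := by
    rw [hedef, mul_comm Complex.I _]
    exact Complex.norm_mul_exp_arg_mul_I z₀
  have habs : (‖z₀‖ : ℝ) ≠ 0 := by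
    simp [hz₀]
  have hene : e ≠ 0 := Complex.exp_ne_zero _
  have hee : e * conj e = 1 := by
    have h1 : ‖e‖ = 1 := by
      rw [hedef, mul_comm]
      exact Complex.norm_exp_ofReal_mul_I _
    rw [Complex.mul_conj, Complex.normSq_eq_norm_sq, h1]
    norm_num
  have htrans : ∀ x : ℂ, (x * conj z₀).im = 0 → (x * conj e).im = 0 := by
    intro x hx
    have hrw : x * conj z₀ = ((‖z₀‖ : ℝ) : ℂ) * (x * conj e) := by
      conv_lhs => rw [← he]
      simp only [map_mul, Complex.conj_ofReal]
      ring
    rw [hrw, ← mul_assoc, real_mul_im] at hx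
    rcases mul_eq_zero.mp hx with h | h
    · exact absurd h habs
    · exact h
  -- the flat coordinates
  set sfun : ℝ × ℝ → ℝ := fun p => ((ξ p - ξ p₀) * conj e).re with hsfundef
  set tfun : ℝ × ℝ → ℝ := fun p => ((ψ p - ψ p₀) * conj e).re with htfundef
  have him1 : ∀ p ∈ Bl, ((ξ p - ξ p₀) * conj e).im = 0 := by
    have hder : ∀ q ∈ Bl, HasFDerivAt (fun r => ((ξ r - ξ p₀) * conj e).im)
        (0 : ℝ × ℝ →L[ℝ] ℝ) q := by
      intro q hqB
      have hq := hBlU hqB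
      have h1' := ((hdξ q hq).sub_const (ξ p₀)).mul_const (conj e)
      have h2' := Complex.imCLM.hasFDerivAt.comp q h1'
      have hz : Complex.imCLM.comp ((starRingEnd ℂ) e • fderiv ℝ ξ q)
          = (0 : ℝ × ℝ →L[ℝ] ℝ) := by
        refine ContinuousLinearMap.ext fun w => ?_
        simp only [ContinuousLinearMap.coe_comp', Function.comp_apply,
          ContinuousLinearMap.smul_apply, Complex.imCLM_apply, smul_eq_mul,
          ContinuousLinearMap.zero_apply]
        rw [mul_comm]
        exact htrans _ (hlineξ q hqB w)
      rw [← hz]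
      exact h2'
    intro p hpB
    have h := const_of_deriv_zero hBlopen hBlconv hder hpB hp₀Bl
    simpa using h
  have him2 : ∀ p ∈ Bl, ((ψ p - ψ p₀) * conj e).im = 0 := by
    have hder : ∀ q ∈ Bl, HasFDerivAt (fun r => ((ψ r - ψ p₀) * conj e).im)
        (0 : ℝ × ℝ →L[ℝ] ℝ) q := by
      intro q hqB
      have hq := hBlU hqB
      have h1' := ((hdψ q hq).sub_const (ψ p₀)).mul_const (conj e)
      have h2' := Complex.imCLM.hasFDerivAt.comp q h1'
      have hz : Complex.imCLM.comp ((starRingEnd ℂ) e • fderiv ℝ ψ q)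
          = (0 : ℝ × ℝ →L[ℝ] ℝ) := by
        refine ContinuousLinearMap.ext fun w => ?_
        simp only [ContinuousLinearMap.coe_comp', Function.comp_apply,
          ContinuousLinearMap.smul_apply, Complex.imCLM_apply, smul_eq_mul,
          ContinuousLinearMap.zero_apply]
        rw [mul_comm]
        exact htrans _ (hlineψ q hqB w)
      rw [← hz]
      exact h2'
    intro p hpB
    have h := const_of_deriv_zero hBlopen hBlconv hder hpB hp₀Bl
    simpa using h
  have hrepξ : ∀ p ∈ Bl, ξ p = ((sfun p : ℝ) : ℂ) * e + ξ p₀ := by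
    intro p hpB
    have h := realpart_eq (him1 p hpB)
    have h2 : ((sfun p : ℝ) : ℂ) * e = ξ p - ξ p₀ := by
      calc ((sfun p : ℝ) : ℂ) * e = (((ξ p - ξ p₀) * conj e) * e) := by rw [hsfundef]; rw [h]
        _ = (ξ p - ξ p₀) * (e * conj e) := by ring
        _ = ξ p - ξ p₀ := by rw [hee, mul_one]
    rw [h2]
    ring
  have hrepψ : ∀ p ∈ Bl, ψ p = ((tfun p : ℝ) : ℂ) * e + ψ p₀ := by
    intro p hpB
    have h := realpart_eq (him2 p hpB)
    have h2 : ((tfun p : ℝ) : ℂ) * e = ψ p - ψ p₀ := by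
      calc ((tfun p : ℝ) : ℂ) * e = (((ψ p - ψ p₀) * conj e) * e) := by rw [htfundef]; rw [h]
        _ = (ψ p - ψ p₀) * (e * conj e) := by ring
        _ = ψ p - ψ p₀ := by rw [hee, mul_one]
    rw [h2]
    ring
  -- the chart map F
  set F : ℝ × ℝ → ℝ × ℝ := fun p => (sfun p, tfun p) with hFdef
  have hsS : ContDiffOn ℝ (⊤ : ℕ∞) sfun U :=
    Complex.reCLM.contDiff.comp_contDiffOn ((hξ.sub contDiffOn_const).mul contDiffOn_const)
  have htS : ContDiffOn ℝ (⊤ : ℕ∞) tfun U :=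
    Complex.reCLM.contDiff.comp_contDiffOn ((hψC.sub contDiffOn_const).mul contDiffOn_const)
  have hF1 : ContDiffAt ℝ 1 F p₀ :=
    ((hsS.prodMk htS).contDiffAt (hU.mem_nhds hp₀)).of_le (by simp)
  set T : ℂ →L[ℝ] ℝ :=
    Complex.reCLM.comp ((ContinuousLinearMap.mul ℝ ℂ).flip (conj e)) with hTdef
  set L : ℝ × ℝ →L[ℝ] ℝ × ℝ :=
    (T.comp (fderiv ℝ ξ p₀)).prod (T.comp (fderiv ℝ ψ p₀)) with hLdef
  have hFs : HasFDerivAt sfun (T.comp (fderiv ℝ ξ p₀)) p₀ :=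
    T.hasFDerivAt.comp p₀ ((hdξ p₀ hp₀).sub_const (ξ p₀))
  have hFt : HasFDerivAt tfun (T.comp (fderiv ℝ ψ p₀)) p₀ :=
    T.hasFDerivAt.comp p₀ ((hdψ p₀ hp₀).sub_const (ψ p₀))
  have hLF : HasFDerivAt F L p₀ := hFs.prodMk hFt
  have hker : ∀ w : ℝ × ℝ, L w = 0 → w = 0 := by
    intro w hw
    rw [Prod.ext_iff] at hw
    have hw1 : (fderiv ℝ ξ p₀ w * conj e).re = 0 := hw.1
    have hw2 : (fderiv ℝ ψ p₀ w * conj e).re = 0 := hw.2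
    have hi1 : (fderiv ℝ ξ p₀ w * conj e).im = 0 := htrans _ (hlineξ p₀ hp₀Bl w)
    have hi2 : (fderiv ℝ ψ p₀ w * conj e).im = 0 := htrans _ (hlineψ p₀ hp₀Bl w)
    have hz1 : fderiv ℝ ξ p₀ w * conj e = 0 := Complex.ext hw1 hi1
    have hz2 : fderiv ℝ ψ p₀ w * conj e = 0 := Complex.ext hw2 hi2
    have hce : conj e ≠ 0 := by
      intro h
      apply hene
      have h2 := congrArg (starRingEnd ℂ) h
      simpa using h2
    exact hinj p₀ hp₀ w ((mul_eq_zero.mp hz1).resolve_right hce)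
      ((mul_eq_zero.mp hz2).resolve_right hce)
  have hLinj : Function.Injective L := by
    intro w₁ w₂ hw
    have hsub : L (w₁ - w₂) = 0 := by
      rw [L.map_sub, hw, sub_self]
    exact sub_eq_zero.mp (hker (w₁ - w₂) hsub)
  have hLbij : Function.Bijective (L.toLinearMap) :=
    ⟨hLinj, LinearMap.injective_iff_surjective.mp hLinj⟩
  set eC : (ℝ × ℝ) ≃L[ℝ] (ℝ × ℝ) :=
    (LinearEquiv.ofBijective L.toLinearMap hLbij).toContinuousLinearEquiv with heC
  have hcoe : (eC : (ℝ × ℝ) →L[ℝ] (ℝ × ℝ)) = L := by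
    refine ContinuousLinearMap.ext fun w => ?_
    rfl
  have hstrict : HasStrictFDerivAt F (eC : (ℝ × ℝ) →L[ℝ] (ℝ × ℝ)) p₀ :=
    hF1.hasStrictFDerivAt' (by rw [hcoe]; exact hLF) one_ne_zero
  set plf := hstrict.toOpenPartialHomeomorph F with hplfdef
  have hplfcoe : ⇑plf = F := hstrict.toOpenPartialHomeomorph_coe
  have hsrc : p₀ ∈ plf.source := hstrict.mem_toOpenPartialHomeomorph_source
  set O : Set (ℝ × ℝ) := Bl ∩ plf.source with hOdef
  have hOopen : IsOpen O := hBlopen.inter plf.open_source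
  have hOp₀ : p₀ ∈ O := ⟨hp₀Bl, hsrc⟩
  have hOsub : O ⊆ plf.source := Set.inter_subset_right
  set V : Set (ℝ × ℝ) := plf.target ∩ plf.symm ⁻¹' O with hVdef
  have hVopen : IsOpen V := plf.isOpen_inter_preimage_symm hOopen
  refine ⟨C₀, ξ p₀, ψ p₀, V, plf.symm, F p₀, hVopen, ?_, ?_, ?_, ?_, ?_, ?_, ?_⟩
  · -- F p₀ ∈ V
    constructor
    · rw [← hplfcoe]
      exact plf.map_source hsrc
    · show plf.symm (F p₀) ∈ O
      rw [← hplfcoe]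
      rw [plf.left_inv hsrc]
      exact hOp₀
  · rw [← hplfcoe]
    exact plf.left_inv hsrc
  · exact plf.continuousOn_symm.mono Set.inter_subset_left
  · exact plf.symm.injOn.mono Set.inter_subset_left
  · intro q hq
    exact hBlU (hq.2.1)
  · have himg : plf.symm '' V = O := by
      rw [hVdef, Set.image_inter_preimage, OpenPartialHomeomorph.symm_image_target_eq_source]
      exact Set.inter_eq_self_of_subset_right hOsub
    rw [himg]
    exact hOopen
  · intro q hq
    have hqt : q ∈ plf.target := hq.1
    have hφO : plf.symm q ∈ O := hq.2
    have hφBl : plf.symm q ∈ Bl := hφO.1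
    have hFq : F (plf.symm q) = q := by
      rw [← hplfcoe]
      exact plf.right_inv hqt
    have hs1 : sfun (plf.symm q) = q.1 := congrArg Prod.fst hFq
    have ht1 : tfun (plf.symm q) = q.2 := congrArg Prod.snd hFq
    constructor
    · rw [hrepξ _ hφBl, hs1]
    · have hψrep : ψ (plf.symm q) = ((q.2 : ℝ) : ℂ) * e + ψ p₀ := by
        rw [hrepψ _ hφBl, ht1]
      have hψp := hψ (plf.symm q)
      have hexp1 : ((Real.exp (2 * u (ξ (plf.symm q))) : ℝ) : ℂ)
          * ((Real.exp (-(2 * u (ξ (plf.symm q)))) : ℝ) : ℂ) = 1 := by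
        rw [← Complex.ofReal_mul, ← Real.exp_add]
        simp
      calc η (plf.symm q) = η (plf.symm q) * 1 := (mul_one _).symm
        _ = η (plf.symm q) * (((Real.exp (2 * u (ξ (plf.symm q))) : ℝ) : ℂ)
              * ((Real.exp (-(2 * u (ξ (plf.symm q)))) : ℝ) : ℂ)) := by rw [hexp1]
        _ = ψ (plf.symm q) * ((Real.exp (-(2 * u (ξ (plf.symm q)))) : ℝ) : ℂ) := by
              rw [← mul_assoc, ← hψp]
        _ = (((q.2 : ℝ) : ℂ) * e + ψ p₀)
              * ((Real.exp (-(2 * u (ξ (plf.symm q)))) : ℝ) : ℂ) := by rw [hψrep]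
end
end
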